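/- arXiv:0903.3259 — 5 statements merged into one kernel-verified Lean document; each statement's English description precedes it below -/
import Mathlib

section
/- Let G be the cumulative distribution function of a positive random variable ζ, and for y ≥ 0 with G(y) < 1 let G_y(x) = (G(x+y) − G(y))/(1 − G(y)). Suppose G belongs to the class NBU or to the class NWU, and suppose sup over x ≥ 0 and y ≥ 0 (with G(y) < 1) of |G(x) − G_y(x)| < ε for some ε > 0. Then sup over x ≥ 0 and y₁, y₂ ≥ 0 (with G(y₁) < 1 and G(y₂) < 1) of |G_{y₁}(x) − G_{y₂}(x)| < ε. -/
/-!
NBU (resp. NWU) says exactly that `G ≤ G_y` (resp. `G_y ≤ G`) on `[0, ∞)` for every admissible `y`.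
So for fixed `x` the values `G_{y₁}(x)` and `G_{y₂}(x)` lie on the same side of `G(x)`, and their
distance is at most the larger of their distances to `G(x)`, each of which is bounded by the
first supremum.
-/

open Filter Set

/-- Residual-life distribution function: `G_y(x) = (G(x+y) - G(y)) / (1 - G(y))`. -/
noncomputable def resid (G : ℝ → ℝ) (y x : ℝ) : ℝ := (G (x + y) - G y) / (1 - G y)

theorem abs_sub_le_of_same_side {α : Type*} [AddCommGroup α] [LinearOrder α] [IsOrderedAddMonoid α]
    {a b c s : α} (hside : c ≤ a ∧ c ≤ b ∨ a ≤ c ∧ b ≤ c) (ha : |c - a| ≤ s) (hb : |c - b| ≤ s) :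
    |a - b| ≤ s := by
  rcases hside with ⟨hca, hcb⟩ | ⟨hac, hbc⟩
  · rw [abs_sub_comm] at ha hb
    rw [← sub_sub_sub_cancel_right a b c]
    exact abs_sub_le_of_nonneg_of_le (sub_nonneg.2 hca) ((le_abs_self _).trans ha)
      (sub_nonneg.2 hcb) ((le_abs_self _).trans hb)
  · rw [abs_sub_comm, ← sub_sub_sub_cancel_left a b c]
    exact abs_sub_le_of_nonneg_of_le (sub_nonneg.2 hac) ((le_abs_self _).trans ha)
      (sub_nonneg.2 hbc) ((le_abs_self _).trans hb)

section resid

variable {G : ℝ → ℝ} {x y : ℝ}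

theorem le_resid_iff (hy : G y < 1) :
    G x ≤ resid G y x ↔ 1 - G (x + y) ≤ (1 - G x) * (1 - G y) := by
  rw [resid, le_div_iff₀ (sub_pos.2 hy)]
  constructor <;> intro h <;> linarith

theorem resid_le_iff (hy : G y < 1) :
    resid G y x ≤ G x ↔ (1 - G x) * (1 - G y) ≤ 1 - G (x + y) := by
  rw [resid, div_le_iff₀ (sub_pos.2 hy)]
  constructor <;> intro h <;> linarith

theorem resid_mem_Icc (hMono : Monotone G) (hle : ∀ z, G z ≤ 1) (hx : 0 ≤ x) (hy : G y < 1) :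
    resid G y x ∈ Icc 0 1 := by
  have hd : 0 < 1 - G y := sub_pos.2 hy
  refine ⟨div_nonneg ?_ hd.le, (div_le_one hd).2 ?_⟩
  · exact sub_nonneg.2 (hMono (le_add_of_nonneg_left hx))
  · linarith [hle (x + y)]

theorem bddAbove_abs_sub_resid (hMono : Monotone G) (hle : ∀ z, G z ≤ 1) (hG0 : G 0 = 0) :
    BddAbove {v : ℝ | ∃ x ≥ (0:ℝ), ∃ y ≥ (0:ℝ), G y < 1 ∧ v = |G x - resid G y x|} := by
  refine ⟨1, ?_⟩
  rintro v ⟨x, hx, y, -, hy, rfl⟩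
  have hGx : G x ∈ Icc 0 1 := ⟨hG0 ▸ hMono hx, hle x⟩
  exact abs_sub_le_of_nonneg_of_le hGx.1 hGx.2 (resid_mem_Icc hMono hle hx hy).1
    (resid_mem_Icc hMono hle hx hy).2

end resid

theorem residual_sup_eps_of_NBU_or_NWU_general
    (G : ℝ → ℝ) (hMono : Monotone G)
    (hZero : ∀ x ≤ (0:ℝ), G x = 0)
    (hTop : Tendsto G atTop (nhds 1))
    (hAging : (∀ x ≥ (0:ℝ), ∀ y ≥ (0:ℝ), 1 - G (x + y) ≤ (1 - G x) * (1 - G y)) ∨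
      (∀ x ≥ (0:ℝ), ∀ y ≥ (0:ℝ), (1 - G x) * (1 - G y) ≤ 1 - G (x + y)))
    (ε : ℝ)
    (hSup : sSup {v : ℝ | ∃ x ≥ (0:ℝ), ∃ y ≥ (0:ℝ), G y < 1 ∧ v = |G x - resid G y x|} < ε) :
    sSup {v : ℝ | ∃ x ≥ (0:ℝ), ∃ y₁ ≥ (0:ℝ), ∃ y₂ ≥ (0:ℝ), G y₁ < 1 ∧ G y₂ < 1 ∧
      v = |resid G y₁ x - resid G y₂ x|} < ε := by
  have hle : ∀ z, G z ≤ 1 := hMono.ge_of_tendsto hTop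
  have hG0 : G 0 = 0 := hZero 0 le_rfl
  have hbdd := bddAbove_abs_sub_resid hMono hle hG0
  have hne : {v : ℝ | ∃ x ≥ (0:ℝ), ∃ y₁ ≥ (0:ℝ), ∃ y₂ ≥ (0:ℝ), G y₁ < 1 ∧ G y₂ < 1 ∧
      v = |resid G y₁ x - resid G y₂ x|}.Nonempty :=
    ⟨_, 0, le_rfl, 0, le_rfl, 0, le_rfl, by simp [hG0], by simp [hG0], rfl⟩
  refine (csSup_le hne ?_).trans_lt hSup
  rintro v ⟨x, hx, y₁, hy₁, y₂, hy₂, h₁, h₂, rfl⟩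
  refine abs_sub_le_of_same_side ?_ (le_csSup hbdd ⟨x, hx, y₁, hy₁, h₁, rfl⟩)
    (le_csSup hbdd ⟨x, hx, y₂, hy₂, h₂, rfl⟩)
  rcases hAging with hNBU | hNWU
  · exact .inl ⟨(le_resid_iff h₁).2 (hNBU x hx y₁ hy₁), (le_resid_iff h₂).2 (hNBU x hx y₂ hy₂)⟩
  · exact .inr ⟨(resid_le_iff h₁).2 (hNWU x hx y₁ hy₁), (resid_le_iff h₂).2 (hNWU x hx y₂ hy₂)⟩

/-- If `G` is NBU or NWU and `sup_{x ≥ 0, y ≥ 0, G(y) < 1} |G(x) - G_y(x)| < ε`, then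
`sup_{x ≥ 0, y₁, y₂ ≥ 0, G(y₁) < 1, G(y₂) < 1} |G_{y₁}(x) - G_{y₂}(x)| < ε`. -/
theorem residual_sup_eps_of_NBU_or_NWU
    (G : ℝ → ℝ) (hMono : Monotone G)
    (hZero : ∀ x ≤ (0:ℝ), G x = 0)
    (hRC : ∀ x : ℝ, ContinuousWithinAt G (Set.Ici x) x)
    (hTop : Tendsto G atTop (nhds 1))
    (hAging : (∀ x ≥ (0:ℝ), ∀ y ≥ (0:ℝ), 1 - G (x + y) ≤ (1 - G x) * (1 - G y)) ∨
      (∀ x ≥ (0:ℝ), ∀ y ≥ (0:ℝ), (1 - G x) * (1 - G y) ≤ 1 - G (x + y)))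
    (ε : ℝ) (hε : 0 < ε)
    (hSup : sSup {v : ℝ | ∃ x ≥ (0:ℝ), ∃ y ≥ (0:ℝ), G y < 1 ∧ v = |G x - resid G y x|} < ε) :
    sSup {v : ℝ | ∃ x ≥ (0:ℝ), ∃ y₁ ≥ (0:ℝ), ∃ y₂ ≥ (0:ℝ), G y₁ < 1 ∧ G y₂ < 1 ∧
      v = |resid G y₁ x - resid G y₂ x|} < ε :=
  residual_sup_eps_of_NBU_or_NWU_general G hMono hZero hTop hAging ε hSup
end

section
/- Let G be the cumulative distribution function of a positive random variable ζ with finite mean 1/λ = ∫₀^∞ x dG(x), and for y ≥ 0 with G(y) < 1 let G_y(x) = (G(x+y) − G(y))/(1 − G(y)). If sup over x ≥ 0 and y ≥ 0 (with G(y) < 1) of |G(x) − G_y(x)| < ε for some ε > 0, then sup over x ≥ 0 of |G(x) − (1 − e^{−λx})| < 2ε. -/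
/-!
Write `F = 1 - G` for the survival function and `R x = ∫_{(x,∞)} F`, so that `R 0 = 1/λ` and
`R' = -F`. The hypothesis says `|F (x + y) - F x * F y| ≤ s * F y`; integrating in `y` gives
`|F x - λ R x| ≤ s`, so `R` almost solves `R' = -λ R`. Fencing `e^{λx} R x - R 0` by
`s (e^{λx} - 1) / λ` gives `|λ R x - e^{-λx}| ≤ s (1 - e^{-λx})`, and the triangle inequality
gives `|F x - e^{-λx}| ≤ 2 s`.
-/

open MeasureTheory Set

open Topology ProbabilityTheory

section Residual

variable {G : ℝ → ℝ} {s x y : ℝ}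

lemma sub_resid_mul_one_sub (hy : G y ≠ 1) :
    (G x - resid G y x) * (1 - G y) = (1 - G (x + y)) - (1 - G x) * (1 - G y) := by
  rw [resid, sub_mul, div_mul_cancel₀ _ (sub_ne_zero.2 (Ne.symm hy))]
  ring

lemma abs_sub_resid_le_one (hG : Monotone G) (hG0 : ∀ t, 0 ≤ G t) (hG1 : ∀ t, G t ≤ 1)
    (hx : 0 ≤ x) (hy : G y < 1) : |G x - resid G y x| ≤ 1 := by
  have hyx : G y ≤ G (x + y) := hG (by linarith)
  have h0 : 0 ≤ resid G y x := div_nonneg (by linarith) (by linarith)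
  have h1 : resid G y x ≤ 1 := (div_le_one (by linarith)).2 (by linarith [hG1 (x + y)])
  rw [abs_le]
  constructor <;> linarith [hG0 x, hG1 x]

lemma abs_one_sub_add_sub_mul_le (hG : Monotone G) (hG1 : ∀ t, G t ≤ 1) (hx : 0 ≤ x)
    (h : G y < 1 → |G x - resid G y x| ≤ s) :
    |(1 - G (x + y)) - (1 - G x) * (1 - G y)| ≤ s * (1 - G y) := by
  rcases (hG1 y).lt_or_eq with hy | hy
  · rw [← sub_resid_mul_one_sub hy.ne, abs_mul, abs_of_pos (sub_pos.2 hy)]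
    exact mul_le_mul_of_nonneg_right (h hy) (sub_pos.2 hy).le
  · have hxy : G (x + y) = 1 := le_antisymm (hG1 _) (hy ▸ hG (by linarith))
    simp [hy, hxy]

end Residual

section Tail

variable {F : ℝ → ℝ} {a s x lam X : ℝ}

lemma abs_integral_Ioi_sub_mul_le (hF : IntegrableOn F (Ioi 0)) (hx : 0 ≤ x)
    (h : ∀ y > 0, |F (x + y) - F x * F y| ≤ s * F y) :
    |(∫ t in Ioi x, F t) - F x * ∫ t in Ioi 0, F t| ≤ s * ∫ t in Ioi 0, F t := by
  have hshift := measurePreserving_add_left volume x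
  have hemb := measurableEmbedding_addLeft x
  have himage : (fun y => x + y) '' Ioi 0 = Ioi x := by simp
  have hFx : IntegrableOn (fun y => F (x + y)) (Ioi 0) :=
    (hshift.integrableOn_image hemb).1 (himage ▸ hF.mono_set (Ioi_subset_Ioi hx))
  have htail : ∫ t in Ioi x, F t = ∫ y in Ioi 0, F (x + y) :=
    himage ▸ hshift.setIntegral_image_emb hemb F (Ioi 0)
  calc |(∫ t in Ioi x, F t) - F x * ∫ t in Ioi 0, F t|
      = |∫ y in Ioi 0, (F (x + y) - F x * F y)| := by
        rw [integral_sub hFx (hF.const_mul _), integral_const_mul, htail]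
    _ ≤ ∫ y in Ioi 0, |F (x + y) - F x * F y| := abs_integral_le_integral_abs
    _ ≤ ∫ y in Ioi 0, s * F y :=
        setIntegral_mono_on (hFx.sub (hF.const_mul _)).abs (hF.const_mul _) measurableSet_Ioi h
    _ = s * ∫ t in Ioi 0, F t := integral_const_mul _ _

lemma hasDerivWithinAt_integral_Ioi (hF : IntegrableOn F (Ioi a)) (hx : a ≤ x)
    (hmeas : StronglyMeasurableAtFilter F (𝓝[>] x)) (hcont : ContinuousWithinAt F (Ioi x) x) :
    HasDerivWithinAt (fun b => ∫ t in Ioi b, F t) (-F x) (Ici x) x := by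
  have hsplit :
      ∀ b, a ≤ b → ∫ t in Ioi b, F t = (∫ t in Ioi a, F t) - ∫ t in a..b, F t :=
    fun b hb => by rw [← intervalIntegral.integral_Ioi_sub_Ioi hF hb, sub_sub_cancel]
  have hint : IntervalIntegrable F volume a x :=
    (intervalIntegrable_iff_integrableOn_Ioc_of_le hx).2 (hF.mono_set Ioc_subset_Ioi_self)
  exact ((intervalIntegral.integral_hasDerivWithinAt_right hint hmeas hcont).const_sub _).congr
    (fun b hb => hsplit b (hx.trans hb)) (hsplit x hx)

lemma abs_sub_mul_exp_neg_le {R R' : ℝ → ℝ} (hlam : lam ≠ 0) (hX : 0 ≤ X)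
    (hR : ContinuousOn R (Icc 0 X)) (hR' : ∀ x ∈ Ico 0 X, HasDerivWithinAt R (R' x) (Ici x) x)
    (hbound : ∀ x ∈ Ico 0 X, |R' x + lam * R x| ≤ s) :
    |R X - R 0 * Real.exp (-lam * X)| ≤ s / lam * (1 - Real.exp (-lam * X)) := by
  have hexp : ∀ u : ℝ, HasDerivAt (fun v => Real.exp (lam * v)) (Real.exp (lam * u) * lam) u :=
    fun u => by simpa using ((hasDerivAt_id u).const_mul lam).exp
  have hfence := image_norm_le_of_norm_deriv_right_le_deriv_boundary
    (f := fun u => Real.exp (lam * u) * R u - R 0)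
    (f' := fun u => Real.exp (lam * u) * (R' u + lam * R u))
    (B := fun u => s / lam * (Real.exp (lam * u) - 1)) (B' := fun u => s * Real.exp (lam * u))
    (by fun_prop)
    (fun x hx => (((hexp x).hasDerivWithinAt.mul (hR' x hx)).sub_const (R 0)).congr_deriv
      (by ring))
    (by simp)
    (fun u => (((hexp u).sub_const 1).const_mul (s / lam)).congr_deriv (by field_simp))
    (fun x hx => by
      rw [Real.norm_eq_abs, abs_mul, abs_of_pos (Real.exp_pos _), mul_comm s]
      exact mul_le_mul_of_nonneg_left (hbound x hx) (Real.exp_pos _).le)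
    (right_mem_Icc.2 hX)
  have hE : Real.exp (-lam * X) * Real.exp (lam * X) = 1 := by rw [← Real.exp_add]; simp
  calc |R X - R 0 * Real.exp (-lam * X)|
      = |Real.exp (-lam * X) * (Real.exp (lam * X) * R X - R 0)| := by
        congr 1; linear_combination (-R X) * hE
    _ ≤ Real.exp (-lam * X) * (s / lam * (Real.exp (lam * X) - 1)) := by
        rw [abs_mul, abs_of_pos (Real.exp_pos _)]
        exact mul_le_mul_of_nonneg_left hfence (Real.exp_pos _).le
    _ = s / lam * (1 - Real.exp (-lam * X)) := by linear_combination (s / lam) * hE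

lemma abs_sub_exp_neg_le_of_abs_integral_Ioi_sub_mul_le (hlam : 0 < lam)
    (hF : IntegrableOn F (Ioi 0)) (hmean : ∫ t in Ioi 0, F t = 1 / lam) (hmeas : Measurable F)
    (hrc : ∀ x, ContinuousWithinAt F (Ioi x) x)
    (h : ∀ x ≥ 0,
      |(∫ t in Ioi x, F t) - F x * ∫ t in Ioi 0, F t| ≤ s * ∫ t in Ioi 0, F t)
    (hX : 0 ≤ X) :
    |F X - Real.exp (-lam * X)| ≤ s * (2 - Real.exp (-lam * X)) := by
  set R := fun b => ∫ t in Ioi b, F t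
  have hFR : ∀ x ≥ 0, |F x - lam * R x| ≤ s := fun x hx => by
    have hx := h x hx
    rw [hmean] at hx
    calc |F x - lam * R x| = |lam| * |R x - F x * (1 / lam)| := by
          rw [← abs_mul, abs_sub_comm]; congr 1; field_simp
      _ ≤ lam * (s * (1 / lam)) := by
          rw [abs_of_pos hlam]; exact mul_le_mul_of_nonneg_left hx hlam.le
      _ = s := by field_simp
  have hRexp := abs_sub_mul_exp_neg_le (R' := fun x => -F x) hlam.ne' hX
    (hF.continuousOn_Ici_primitive_Ioi.mono Icc_subset_Ici_self)
    (fun x hx => hasDerivWithinAt_integral_Ioi hF hx.1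
      hmeas.stronglyMeasurable.stronglyMeasurableAtFilter (hrc x))
    (fun x hx => by rw [← abs_neg]; convert hFR x hx.1 using 2; ring)
  have hR0 : R 0 = 1 / lam := hmean
  have hlamR : |lam * R X - Real.exp (-lam * X)| ≤ s * (1 - Real.exp (-lam * X)) := by
    calc |lam * R X - Real.exp (-lam * X)| = |lam| * |R X - R 0 * Real.exp (-lam * X)| := by
          rw [← abs_mul, hR0]; congr 1; field_simp
      _ ≤ lam * (s / lam * (1 - Real.exp (-lam * X))) := by
          rw [abs_of_pos hlam]; exact mul_le_mul_of_nonneg_left hRexp hlam.le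
      _ = s * (1 - Real.exp (-lam * X)) := by field_simp
  calc |F X - Real.exp (-lam * X)|
      ≤ |F X - lam * R X| + |lam * R X - Real.exp (-lam * X)| := abs_sub_le _ _ _
    _ ≤ s + s * (1 - Real.exp (-lam * X)) := add_le_add (hFR X hX) hlamR
    _ = s * (2 - Real.exp (-lam * X)) := by ring

end Tail

section Survival

variable {μ : Measure ℝ} [IsProbabilityMeasure μ]

lemma one_sub_cdf_eq_measureReal_Ioi (t : ℝ) : 1 - cdf μ t = μ.real (Ioi t) := by
  rw [cdf_eq_real, ← compl_Iic, probReal_compl_eq_one_sub measurableSet_Iic]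

lemma integrableOn_Ioi_one_sub_cdf (h0 : 0 ≤ᵐ[μ] id) (hint : Integrable id μ) :
    IntegrableOn (fun t => 1 - cdf μ t) (Ioi 0) := by
  simp_rw [one_sub_cdf_eq_measureReal_Ioi, measureReal_def]
  refine integrable_toReal_of_lintegral_ne_top
    (Antitone.measurable fun a b hab => measure_mono (Ioi_subset_Ioi hab)).aemeasurable ?_
  exact ((lintegral_eq_lintegral_meas_lt μ h0 hint.aemeasurable).symm.trans_lt
    hint.lintegral_lt_top).ne

lemma integral_Ioi_one_sub_cdf (h0 : 0 ≤ᵐ[μ] id) (hint : Integrable id μ) :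
    ∫ t in Ioi 0, (1 - cdf μ t) = ∫ x, x ∂μ := by
  simp_rw [one_sub_cdf_eq_measureReal_Ioi]
  exact (hint.integral_eq_integral_meas_lt h0).symm

end Survival

theorem azlarov_volodin_bound_general
    (μ : Measure ℝ) [IsProbabilityMeasure μ] (hPos : μ (Set.Iic 0) = 0)
    (G : ℝ → ℝ) (hG : ∀ x, G x = (μ (Set.Iic x)).toReal)
    (lam : ℝ) (hlam : 0 < lam)
    (hInt : Integrable (fun x : ℝ => x) μ)
    (hMean : ∫ x, x ∂μ = 1 / lam)
    (ε : ℝ)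
    (hSup : sSup {v : ℝ | ∃ x ≥ (0:ℝ), ∃ y ≥ (0:ℝ), G y < 1 ∧ v = |G x - resid G y x|} < ε) :
    sSup {v : ℝ | ∃ x ≥ (0:ℝ), v = |G x - (1 - Real.exp (-lam * x))|} < 2 * ε := by
  obtain rfl : G = cdf μ := funext fun x => by rw [hG, cdf_eq_real, measureReal_def]
  have h0 : 0 ≤ᵐ[μ] id := measure_mono_null (fun x (hx : ¬0 ≤ x) => (not_le.1 hx).le) hPos
  have hF := integrableOn_Ioi_one_sub_cdf h0 hInt
  set s := sSup {v : ℝ | ∃ x ≥ (0:ℝ), ∃ y ≥ (0:ℝ), cdf μ y < 1 ∧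
    v = |cdf μ x - resid (cdf μ) y x|}
  have hs : ∀ x ≥ 0, ∀ y ≥ 0, cdf μ y < 1 → |cdf μ x - resid (cdf μ) y x| ≤ s :=
    fun x hx y hy hy1 => le_csSup ⟨1, by
      rintro v ⟨x, hx, y, -, hy1, rfl⟩
      exact abs_sub_resid_le_one (cdf μ).mono (cdf_nonneg μ) (cdf_le_one μ) hx hy1⟩
      ⟨x, hx, y, hy, hy1, rfl⟩
  have hs0 : 0 ≤ s :=
    (abs_nonneg _).trans (hs 0 le_rfl 0 le_rfl (by simp [cdf_eq_real, measureReal_def, hPos]))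
  have hbound : ∀ x ≥ 0, |cdf μ x - (1 - Real.exp (-lam * x))| ≤ 2 * s := fun X hX => by
    have h := abs_sub_exp_neg_le_of_abs_integral_Ioi_sub_mul_le hlam hF
      ((integral_Ioi_one_sub_cdf h0 hInt).trans hMean)
      (measurable_const.sub (cdf μ).mono.measurable)
      (fun x => continuousWithinAt_const.sub
        (continuousWithinAt_Ioi_iff_Ici.2 ((cdf μ).right_continuous x)))
      (fun x hx => abs_integral_Ioi_sub_mul_le hF hx fun y hy =>
        abs_one_sub_add_sub_mul_le (cdf μ).mono (cdf_le_one μ) hx (hs x hx y hy.le)) hX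
    have hneg : cdf μ X - (1 - Real.exp (-lam * X)) = -(1 - cdf μ X - Real.exp (-lam * X)) := by
      ring
    rw [hneg, abs_neg]
    nlinarith [Real.exp_pos (-lam * X)]
  refine (csSup_le ?_ ?_).trans_lt (by linarith : 2 * s < 2 * ε)
  · exact ⟨_, 0, le_rfl, rfl⟩
  · rintro v ⟨x, hx, rfl⟩
    exact hbound x hx

/-- Azlarov–Volodin characterization bound: if the CDF `G` of a positive random variable with
mean `1/λ` satisfies `sup_{x ≥ 0, y ≥ 0, G(y) < 1} |G(x) - G_y(x)| < ε`, then
`sup_{x ≥ 0} |G(x) - (1 - e^{-λx})| < 2ε`. -/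
theorem azlarov_volodin_bound
    (μ : Measure ℝ) [IsProbabilityMeasure μ] (hPos : μ (Set.Iic 0) = 0)
    (G : ℝ → ℝ) (hG : ∀ x, G x = (μ (Set.Iic x)).toReal)
    (lam : ℝ) (hlam : 0 < lam)
    (hInt : Integrable (fun x : ℝ => x) μ)
    (hMean : ∫ x, x ∂μ = 1 / lam)
    (ε : ℝ) (hε : 0 < ε)
    (hSup : sSup {v : ℝ | ∃ x ≥ (0:ℝ), ∃ y ≥ (0:ℝ), G y < 1 ∧ v = |G x - resid G y x|} < ε) :
    sSup {v : ℝ | ∃ x ≥ (0:ℝ), v = |G x - (1 - Real.exp (-lam * x))|} < 2 * ε :=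
  azlarov_volodin_bound_general μ hPos G hG lam hlam hInt hMean ε hSup
end

section
/- Let G be the cumulative distribution function of a positive random variable with Laplace–Stieltjes transform Ĝ(s) = ∫₀^∞ e^{−sx} dG(x), let λ > 0, let 0 < p ≤ 1 and q > 0, and suppose sup over x ≥ 0 of |G(x) − (1 − e^{−λx})| ≤ 2ε for some ε > 0. Then sup over s ≥ 0 of | p·Ĝ(s/q)/(1 − (1−p)·Ĝ(s/q)) − pλq/(pλq + s) | ≤ 2ε/p. -/
/-!
Writing `e^{-tx} = ∫_x^∞ t e^{-ty} dy` and exchanging the integrals gives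
`Ĝ(t) = ∫_0^∞ t e^{-ty} G(y) dy`, and likewise `λ/(λ+t) = ∫_0^∞ t e^{-ty} (1 - e^{-λy}) dy`;
since `∫_0^∞ t e^{-ty} dy = 1`, the uniform bound on `G(y) - (1 - e^{-λy})` passes to the
transforms. The map `x ↦ p x / (1 - (1 - p) x)` is `1/p`-Lipschitz on `[0, 1]` (both denominators
are at least `p`) and sends `λ/(λ+t)` to `pλ/(pλ+t)`, which at `t = s/q` is `pλq/(pλq+s)`.
-/

open MeasureTheory Set

/-- Laplace–Stieltjes transform of a measure on `[0, ∞)`. -/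
noncomputable def lst (μ : Measure ℝ) (s : ℝ) : ℝ := ∫ x, Real.exp (-s * x) ∂μ

lemma integral_exp_neg_mul_Ioi {t : ℝ} (ht : 0 < t) (a : ℝ) :
    ∫ y in Ioi a, Real.exp (-t * y) = Real.exp (-t * a) / t := by
  rw [integral_exp_mul_Ioi (neg_neg_iff_pos.mpr ht), neg_div_neg_eq]

lemma ofReal_exp_neg_mul_eq_lintegral_Ici {t : ℝ} (ht : 0 < t) (x : ℝ) :
    ENNReal.ofReal (Real.exp (-t * x)) =
      ∫⁻ y in Ici x, ENNReal.ofReal (t * Real.exp (-t * y)) := by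
  rw [← setLIntegral_congr Ioi_ae_eq_Ici, ← ofReal_integral_eq_lintegral_ofReal
    ((exp_neg_integrableOn_Ioi x ht).const_mul t) (ae_of_all _ fun y => by positivity),
    integral_const_mul, integral_exp_neg_mul_Ioi ht, mul_div_cancel₀ _ ht.ne']

lemma lintegral_exp_neg_mul_eq_lintegral_measure_Iic (μ : Measure ℝ) [SFinite μ] {t : ℝ}
    (ht : 0 < t) :
    ∫⁻ x, ENNReal.ofReal (Real.exp (-t * x)) ∂μ =
      ∫⁻ y, ENNReal.ofReal (t * Real.exp (-t * y)) * μ (Iic y) := by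
  set g : ℝ → ENNReal := fun y => ENNReal.ofReal (t * Real.exp (-t * y))
  have hg : Measurable g := by fun_prop
  have hmeas : Measurable ({z : ℝ × ℝ | z.1 ≤ z.2}.indicator fun z => g z.2) :=
    (hg.comp measurable_snd).indicator (measurableSet_le measurable_fst measurable_snd)
  calc ∫⁻ x, ENNReal.ofReal (Real.exp (-t * x)) ∂μ
      = ∫⁻ x, ∫⁻ y, {z : ℝ × ℝ | z.1 ≤ z.2}.indicator (fun z => g z.2) (x, y) ∂volume ∂μ := by
        refine lintegral_congr fun x => ?_
        rw [ofReal_exp_neg_mul_eq_lintegral_Ici ht, ← lintegral_indicator measurableSet_Ici]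
        rfl
    _ = ∫⁻ y, ∫⁻ x, {z : ℝ × ℝ | z.1 ≤ z.2}.indicator (fun z => g z.2) (x, y) ∂μ :=
        lintegral_lintegral_swap (f := fun x y => {z : ℝ × ℝ | z.1 ≤ z.2}.indicator
          (fun z => g z.2) (x, y)) hmeas.aemeasurable
    _ = ∫⁻ y, g y * μ (Iic y) := by
        refine lintegral_congr fun y => ?_
        rw [← lintegral_indicator_const measurableSet_Iic]
        rfl

lemma monotone_measureReal_Iic (μ : Measure ℝ) [IsFiniteMeasure μ] :
    Monotone fun y => μ.real (Iic y) :=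
  fun _ _ hab => measureReal_mono (Iic_subset_Iic.mpr hab)

lemma lst_eq_integral_measureReal_Iic (μ : Measure ℝ) [IsFiniteMeasure μ] (hμ : μ (Iio 0) = 0)
    {t : ℝ} (ht : 0 < t) :
    lst μ t = ∫ y in Ioi 0, t * Real.exp (-t * y) * μ.real (Iic y) := by
  have hzero : ∀ y ∉ Ici (0 : ℝ), ENNReal.ofReal (t * Real.exp (-t * y)) * μ (Iic y) = 0 :=
    fun y hy => by
      rw [measure_mono_null (Iic_subset_Iio.mpr (not_le.mp hy)) hμ, mul_zero]
  have hF : Measurable fun y => t * Real.exp (-t * y) * μ.real (Iic y) :=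
    (by fun_prop : Measurable fun y => t * Real.exp (-t * y)).mul
      (monotone_measureReal_Iic μ).measurable
  rw [lst, integral_eq_lintegral_of_nonneg_ae (ae_of_all _ fun x => (Real.exp_pos _).le)
      (by fun_prop),
    integral_eq_lintegral_of_nonneg_ae (ae_of_all _ fun y => by positivity)
      hF.aestronglyMeasurable,
    lintegral_exp_neg_mul_eq_lintegral_measure_Iic μ ht, setLIntegral_congr Ioi_ae_eq_Ici,
    ← setLIntegral_eq_of_support_subset (Function.support_subset_iff'.mpr hzero)]
  congr 1
  refine setLIntegral_congr_fun measurableSet_Ici fun y _ => ?_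
  rw [ENNReal.ofReal_mul (p := t * _) (by positivity), ofReal_measureReal]

lemma integral_mul_exp_neg_mul_one_sub_exp_neg_mul {t lam : ℝ} (ht : 0 < t) (hlt : 0 < lam + t) :
    ∫ y in Ioi 0, t * Real.exp (-t * y) * (1 - Real.exp (-lam * y)) = lam / (lam + t) := by
  have hsplit : ∀ y, t * Real.exp (-t * y) * (1 - Real.exp (-lam * y)) =
      t * Real.exp (-t * y) - t * Real.exp (-(lam + t) * y) := fun y => by
    rw [mul_one_sub, mul_assoc, ← Real.exp_add]; ring_nf
  simp_rw [hsplit]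
  rw [integral_sub ((exp_neg_integrableOn_Ioi 0 ht).const_mul t)
      ((exp_neg_integrableOn_Ioi 0 hlt).const_mul t), integral_const_mul, integral_const_mul,
    integral_exp_neg_mul_Ioi ht, integral_exp_neg_mul_Ioi hlt]
  field_simp
  simp

lemma ae_nonneg_of_measure_Iio_zero {μ : Measure ℝ} (hμ : μ (Iio 0) = 0) : ∀ᵐ x ∂μ, 0 ≤ x := by
  rw [ae_iff]
  simp only [not_le]
  exact hμ

lemma lst_mem_Icc (μ : Measure ℝ) [IsProbabilityMeasure μ] (hμ : μ (Iio 0) = 0) {t : ℝ}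
    (ht : 0 ≤ t) : lst μ t ∈ Icc 0 1 := by
  have hle : ∀ᵐ x ∂μ, ‖Real.exp (-t * x)‖ ≤ 1 := by
    filter_upwards [ae_nonneg_of_measure_Iio_zero hμ] with x hx
    rw [Real.norm_of_nonneg (Real.exp_pos _).le, Real.exp_le_one_iff]
    nlinarith
  rw [lst]
  refine ⟨integral_nonneg fun x => (Real.exp_pos _).le, ?_⟩
  simpa using (le_abs_self _).trans (norm_integral_le_of_norm_le_const hle)

lemma abs_lst_sub_le (μ : Measure ℝ) [IsProbabilityMeasure μ] (hμ : μ (Iio 0) = 0)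
    {lam t δ : ℝ} (hlam : 0 < lam) (ht : 0 ≤ t)
    (hδ : ∀ x ≥ (0 : ℝ), |μ.real (Iic x) - (1 - Real.exp (-lam * x))| ≤ δ) :
    |lst μ t - lam / (lam + t)| ≤ δ := by
  rcases ht.eq_or_lt with rfl | ht
  · simpa [lst, hlam.ne'] using (abs_nonneg _).trans (hδ 0 le_rfl)
  have hk : IntegrableOn (fun y => t * Real.exp (-t * y)) (Ioi 0) :=
    (exp_neg_integrableOn_Ioi 0 ht).const_mul t
  have hF : IntegrableOn (fun y => t * Real.exp (-t * y) * μ.real (Iic y)) (Ioi 0) :=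
    hk.mul_bdd (c := 1) (monotone_measureReal_Iic μ).measurable.aestronglyMeasurable
      (ae_of_all _ fun y => (Real.norm_of_nonneg measureReal_nonneg).trans_le measureReal_le_one)
  have hE : IntegrableOn (fun y => t * Real.exp (-t * y) * (1 - Real.exp (-lam * y))) (Ioi 0) :=
    hk.mul_bdd (c := 1) (by fun_prop) <| by
      filter_upwards [ae_restrict_mem measurableSet_Ioi] with y hy
      have hexp_le : Real.exp (-lam * y) ≤ 1 :=
        Real.exp_le_one_iff.mpr (by nlinarith [mem_Ioi.mp hy])
      rw [Real.norm_of_nonneg (sub_nonneg.mpr hexp_le)]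
      linarith [Real.exp_pos (-lam * y)]
  rw [lst_eq_integral_measureReal_Iic μ hμ ht,
    ← integral_mul_exp_neg_mul_one_sub_exp_neg_mul ht (by linarith), ← integral_sub hF hE,
    ← Real.norm_eq_abs]
  calc ‖∫ y in Ioi 0, (t * Real.exp (-t * y) * μ.real (Iic y) -
          t * Real.exp (-t * y) * (1 - Real.exp (-lam * y)))‖
      ≤ ∫ y in Ioi 0, t * Real.exp (-t * y) * δ := by
        refine norm_integral_le_of_norm_le (hk.mul_const δ) ?_
        filter_upwards [ae_restrict_mem measurableSet_Ioi] with y hy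
        rw [← mul_sub, norm_mul, Real.norm_of_nonneg (by positivity)]
        exact mul_le_mul_of_nonneg_left (hδ y (le_of_lt hy)) (by positivity)
    _ = δ := by
        rw [integral_mul_const, integral_const_mul, integral_exp_neg_mul_Ioi ht]
        field_simp
        simp

/-- `geometricCompound p (Ĝ (s / q))` is the transform `Ĥ(s)` of the geometric compound `H`. -/
noncomputable def geometricCompound (p x : ℝ) : ℝ := p * x / (1 - (1 - p) * x)

lemma geometricCompound_div_add {p lam t : ℝ} (h : lam + t ≠ 0) :
    geometricCompound p (lam / (lam + t)) = p * lam / (p * lam + t) := by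
  have hden : 1 - (1 - p) * (lam / (lam + t)) = (p * lam + t) / (lam + t) := by
    field_simp
    ring
  rw [geometricCompound, hden, mul_div_assoc', div_div_div_cancel_right₀ h]

lemma abs_geometricCompound_sub_le {p x y : ℝ} (hp : 0 < p) (hp1 : p ≤ 1) (hx : x ∈ Icc 0 1)
    (hy : y ∈ Icc 0 1) :
    |geometricCompound p x - geometricCompound p y| ≤ |x - y| / p := by
  obtain ⟨hx0, hx1⟩ := hx
  obtain ⟨hy0, hy1⟩ := hy
  have hDx : p ≤ 1 - (1 - p) * x := by nlinarith
  have hDy : p ≤ 1 - (1 - p) * y := by nlinarith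
  have hdiff : geometricCompound p x - geometricCompound p y =
      p * (x - y) / ((1 - (1 - p) * x) * (1 - (1 - p) * y)) := by
    rw [geometricCompound, geometricCompound, div_sub_div _ _ (by linarith) (by linarith)]
    ring
  have hD : 0 < (1 - (1 - p) * x) * (1 - (1 - p) * y) := mul_pos (by linarith) (by linarith)
  rw [hdiff, abs_div, abs_of_pos hD, abs_mul, abs_of_pos hp]
  calc p * |x - y| / ((1 - (1 - p) * x) * (1 - (1 - p) * y))
      ≤ p * |x - y| / (p * p) := by gcongr; linarith
    _ = |x - y| / p := by field_simp

theorem lst_geometric_compound_close_to_exponential_general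
    (μ : Measure ℝ) [IsProbabilityMeasure μ] (hPos : μ (Set.Iic 0) = 0)
    (G : ℝ → ℝ) (hG : ∀ x, G x = (μ (Set.Iic x)).toReal)
    (lam : ℝ) (hlam : 0 < lam)
    (p : ℝ) (hp : 0 < p) (hp1 : p ≤ 1)
    (q : ℝ) (hq : 0 < q)
    (ε : ℝ)
    (hKolm : ∀ x ≥ (0:ℝ), |G x - (1 - Real.exp (-lam * x))| ≤ 2 * ε) :
    ∀ s ≥ (0:ℝ),
      |p * lst μ (s / q) / (1 - (1 - p) * lst μ (s / q)) -
        p * lam * q / (p * lam * q + s)| ≤ 2 * ε / p := by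
  intro s hs
  have hμ : μ (Iio 0) = 0 := measure_mono_null Iio_subset_Iic_self hPos
  have ht : 0 ≤ s / q := div_nonneg hs hq.le
  have hcdf : ∀ x ≥ (0 : ℝ), |μ.real (Iic x) - (1 - Real.exp (-lam * x))| ≤ 2 * ε :=
    fun x hx => by simpa only [hG, measureReal_def] using hKolm x hx
  have hexp : p * lam * q / (p * lam * q + s) = geometricCompound p (lam / (lam + s / q)) := by
    rw [geometricCompound_div_add (by positivity)]
    field_simp
  rw [hexp]
  calc |geometricCompound p (lst μ (s / q)) - geometricCompound p (lam / (lam + s / q))|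
      ≤ |lst μ (s / q) - lam / (lam + s / q)| / p :=
        abs_geometricCompound_sub_le hp hp1 (lst_mem_Icc μ hμ ht)
          ⟨by positivity, (div_le_one (by positivity)).mpr (by linarith)⟩
    _ ≤ 2 * ε / p := by
        gcongr
        exact abs_lst_sub_le μ hμ hlam ht hcdf

/-- If the CDF `G` of a positive random variable satisfies
`sup_{x ≥ 0} |G(x) - (1 - e^{-λx})| ≤ 2ε`, then for `0 < p ≤ 1` and `q > 0`,
`sup_{s ≥ 0} |p·Ĝ(s/q)/(1 - (1-p)·Ĝ(s/q)) - pλq/(pλq + s)| ≤ 2ε/p`. -/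
theorem lst_geometric_compound_close_to_exponential
    (μ : Measure ℝ) [IsProbabilityMeasure μ] (hPos : μ (Set.Iic 0) = 0)
    (G : ℝ → ℝ) (hG : ∀ x, G x = (μ (Set.Iic x)).toReal)
    (lam : ℝ) (hlam : 0 < lam)
    (p : ℝ) (hp : 0 < p) (hp1 : p ≤ 1)
    (q : ℝ) (hq : 0 < q)
    (ε : ℝ) (hε : 0 < ε)
    (hKolm : ∀ x ≥ (0:ℝ), |G x - (1 - Real.exp (-lam * x))| ≤ 2 * ε) :
    ∀ s ≥ (0:ℝ),
      |p * lst μ (s / q) / (1 - (1 - p) * lst μ (s / q)) -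
        p * lam * q / (p * lam * q + s)| ≤ 2 * ε / p :=
  lst_geometric_compound_close_to_exponential_general μ hPos G hG lam hlam p hp hp1 q hq ε hKolm
end

section
/- Let G be the cumulative distribution function of a positive random variable with finite mean a = ∫₀^∞ x dG(x), let Ĝ(s) = ∫₀^∞ e^{−sx} dG(x) be its Laplace–Stieltjes transform, and let μ > 0 satisfy μ·a > 1. Then the functional equation z = Ĝ(μ − μz) has exactly one root in the interval [0, 1), this root lies in (0, 1), and z = 1 is also a root. -/
open MeasureTheory Set

/-! The function `φ z = lst m (mu - mu * z)` is continuous and strictly convex on `(-∞, 1]`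
(strictly, because `m` lives on `x > 0`), with `φ 1 = 1` and `φ 0 = lst m mu > 0`. Its left
derivative at `1` is `mu * a > 1`, so `φ z < z` just below `1`, and the intermediate value
theorem yields a root in `(0, 1)`. A strictly convex function meets the diagonal at most twice,
and `z = 1` is one of those points, so the root below `1` is unique. -/

open Filter Topology

theorem integral_lt_integral_of_ae_lt {α : Type*} [MeasurableSpace α] {μ : Measure α} [NeZero μ]
    {f g : α → ℝ} (hf : Integrable f μ) (hg : Integrable g μ) (hfg : ∀ᵐ x ∂μ, f x < g x) :
    ∫ x, f x ∂μ < ∫ x, g x ∂μ := by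
  have hle : 0 ≤ᵐ[μ] g - f := hfg.mono fun x hx => sub_nonneg.2 hx.le
  have hpos : 0 < ∫ x, (g - f) x ∂μ := by
    refine (integral_nonneg_of_ae hle).lt_of_ne fun h => ?_
    obtain ⟨x, hlt, hx⟩ :=
      (hfg.and ((integral_eq_zero_iff_of_nonneg_ae hle (hg.sub hf)).1 h.symm)).exists
    simp only [Pi.sub_apply, Pi.zero_apply, sub_eq_zero] at hx
    exact hlt.ne' hx
  rwa [Pi.sub_def, integral_sub hg hf, sub_pos] at hpos

theorem StrictConvexOn.comp_sub_mul {f : ℝ → ℝ} {s t : Set ℝ} (hf : StrictConvexOn ℝ t f)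
    (hs : Convex ℝ s) {c k : ℝ} (hk : k ≠ 0) (hst : MapsTo (fun z => c - k * z) s t) :
    StrictConvexOn ℝ s fun z => f (c - k * z) := by
  refine ⟨hs, fun x hx y hy hxy a b ha hb hab => ?_⟩
  have hcomb : c - k * (a • x + b • y) = a • (c - k * x) + b • (c - k * y) := by
    simp only [smul_eq_mul]; linear_combination c * hab.symm
  dsimp only
  rw [hcomb]
  exact hf.2 (hst hx) (hst hy) (by simpa [hk] using hxy) ha hb hab

theorem StrictConvexOn.eq_of_isFixedPt_of_lt {f : ℝ → ℝ} {s : Set ℝ}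
    (hf : StrictConvexOn ℝ s f) {u v w : ℝ} (hu : u ∈ s) (hv : v ∈ s) (hw : w ∈ s)
    (hfu : Function.IsFixedPt f u) (hfv : Function.IsFixedPt f v)
    (hfw : Function.IsFixedPt f w) (huw : u < w) (hvw : v < w) : u = v := by
  wlog huv : u < v generalizing u v
  · rcases (not_lt.1 huv).eq_or_lt with h | h
    · exact h.symm
    · exact (this hv hu hfv hfu hvw huw h).symm
  have := hf.slope_strict_mono_adjacent hu hw huv hvw
  rw [hfu, hfv, hfw, div_self (sub_pos.2 huv).ne', div_self (sub_pos.2 hvw).ne'] at this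
  exact (lt_irrefl 1 this).elim

theorem eventually_lt_of_hasDerivWithinAt_Iio {f : ℝ → ℝ} {f' x : ℝ}
    (hf : HasDerivWithinAt f f' (Iio x) x) (hfx : Function.IsFixedPt f x) (hf' : 1 < f') :
    ∀ᶠ z in 𝓝[<] x, f z < z := by
  have hslope := (hasDerivWithinAt_iff_tendsto_slope' self_notMem_Iio).1 hf
  filter_upwards [hslope.eventually (eventually_gt_nhds hf'), self_mem_nhdsWithin] with z hz hzx
  rw [slope_def_field, hfx, lt_div_iff_of_neg (sub_neg.2 hzx)] at hz
  linarith

section Laplace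

variable {m : Measure ℝ}

theorem lst_zero [IsProbabilityMeasure m] : lst m 0 = 1 := by
  simp [lst]

theorem integrable_exp_neg_mul_of_ae_nonneg [IsFiniteMeasure m] (hm : ∀ᵐ x ∂m, 0 ≤ x) {s : ℝ}
    (hs : 0 ≤ s) : Integrable (fun x => Real.exp (-s * x)) m := by
  refine .of_bound (by fun_prop) 1 ?_
  filter_upwards [hm] with x hx
  rw [Real.norm_of_nonneg (Real.exp_pos _).le, Real.exp_le_one_iff]
  nlinarith

theorem lst_pos [IsFiniteMeasure m] [NeZero m] (hm : ∀ᵐ x ∂m, 0 ≤ x) {s : ℝ} (hs : 0 ≤ s) :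
    0 < lst m s :=
  integral_exp_pos (integrable_exp_neg_mul_of_ae_nonneg hm hs)

theorem continuousOn_lst [IsFiniteMeasure m] (hm : ∀ᵐ x ∂m, 0 ≤ x) :
    ContinuousOn (lst m) (Ici 0) := by
  refine continuousOn_of_dominated (bound := fun _ => 1) (fun s _ => by fun_prop) ?_
    (integrable_const 1) (.of_forall fun x => by fun_prop)
  intro s hs
  filter_upwards [hm] with x hx
  rw [Real.norm_of_nonneg (Real.exp_pos _).le, Real.exp_le_one_iff]
  nlinarith [mem_Ici.1 hs]

theorem strictConvexOn_lst [IsFiniteMeasure m] [NeZero m] (hm : ∀ᵐ x ∂m, 0 < x) :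
    StrictConvexOn ℝ (Ici 0) (lst m) := by
  have hm₀ : ∀ᵐ x ∂m, 0 ≤ x := hm.mono fun x hx => hx.le
  refine ⟨convex_Ici 0, fun s hs t ht hst a b ha hb hab => ?_⟩
  have hint := fun {r : ℝ} (hr : r ∈ Ici 0) => integrable_exp_neg_mul_of_ae_nonneg hm₀ hr
  calc lst m (a • s + b • t)
      < ∫ x, a * Real.exp (-s * x) + b * Real.exp (-t * x) ∂m := by
        refine integral_lt_integral_of_ae_lt (hint (convex_Ici 0 hs ht ha.le hb.le hab))
          (((hint hs).const_mul a).add ((hint ht).const_mul b)) ?_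
        filter_upwards [hm] with x hx
        have hne : -s * x ≠ -t * x := by
          simpa [hx.ne'] using hst
        have key := strictConvexOn_exp.2 (mem_univ _) (mem_univ _) hne ha hb hab
        simp only [smul_eq_mul] at key ⊢
        exact lt_of_eq_of_lt (congrArg Real.exp (by ring)) key
    _ = a • lst m s + b • lst m t := by
        rw [integral_add ((hint hs).const_mul a) ((hint ht).const_mul b), integral_const_mul,
          integral_const_mul]
        rfl

theorem hasDerivWithinAt_lst_zero [IsFiniteMeasure m] (hm : ∀ᵐ x ∂m, 0 ≤ x)
    (hint : Integrable (fun x => x) m) :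
    HasDerivWithinAt (lst m) (-∫ x, x ∂m) (Ioi 0) 0 := by
  rw [hasDerivWithinAt_iff_tendsto_slope' self_notMem_Ioi, ← integral_neg]
  have hslope : slope (lst m) 0 =ᶠ[𝓝[>] 0] fun s => ∫ x, s⁻¹ * (Real.exp (-s * x) - 1) ∂m := by
    filter_upwards [self_mem_nhdsWithin] with s hs
    rw [integral_const_mul, integral_sub (integrable_exp_neg_mul_of_ae_nonneg hm (le_of_lt hs))
      (integrable_const 1), slope_def_field, lst, lst]
    simp [div_eq_inv_mul]
  refine (tendsto_integral_filter_of_dominated_convergence (fun x => x) ?_ ?_ hint ?_).congr'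
    hslope.symm
  · exact .of_forall fun s => by fun_prop
  · filter_upwards [self_mem_nhdsWithin] with s (hs : 0 < s)
    filter_upwards [hm] with x hx
    have hexp_le : Real.exp (-s * x) ≤ 1 := Real.exp_le_one_iff.2 (by nlinarith)
    have hexp_ge : 1 - s * x ≤ Real.exp (-s * x) := by
      linarith [Real.add_one_le_exp (-s * x)]
    rw [Real.norm_eq_abs, abs_le]
    constructor
    · rw [neg_le, ← mul_neg, inv_mul_le_iff₀ hs]
      linarith
    · exact (mul_nonpos_of_nonneg_of_nonpos (inv_nonneg.2 hs.le) (by linarith)).trans hx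
  · refine .of_forall fun x => ?_
    have hderiv : HasDerivAt (fun s => Real.exp (-s * x)) (-x) 0 := by
      simpa using ((hasDerivAt_id (0 : ℝ)).neg.mul_const x).exp
    simpa using hderiv.tendsto_slope_zero_right

theorem hasDerivWithinAt_lst_sub_mul [IsFiniteMeasure m] (hm : ∀ᵐ x ∂m, 0 ≤ x)
    (hint : Integrable (fun x => x) m) {c : ℝ} (hc : 0 < c) :
    HasDerivWithinAt (fun z => lst m (c - c * z)) (c * ∫ x, x ∂m) (Iio 1) 1 := by
  have hlin : HasDerivWithinAt (fun z => c - c * z) (-c) (Iio 1) 1 := by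
    simpa using ((hasDerivAt_id (1 : ℝ)).const_mul c).const_sub c |>.hasDerivWithinAt
  have := (hasDerivWithinAt_lst_zero hm hint).comp_of_eq 1 hlin
    (fun z (hz : z < 1) => by simp only [mem_Ioi]; nlinarith) (by ring)
  rwa [neg_mul_neg, mul_comm] at this

end Laplace

/-- Takács: if `G` is the CDF of a positive random variable with finite mean `a` and
`μ·a > 1`, then the functional equation `z = Ĝ(μ - μz)` has exactly one root in `[0, 1)`,
this root lies in `(0, 1)`, and `z = 1` is also a root. -/
theorem takacs_least_root
    (m : Measure ℝ) [IsProbabilityMeasure m] (hPos : m (Set.Iic 0) = 0)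
    (a : ℝ) (hInt : Integrable (fun x : ℝ => x) m) (ha : ∫ x, x ∂m = a)
    (mu : ℝ) (hmu : 0 < mu) (hma : 1 < mu * a) :
    (∃! z : ℝ, z ∈ Set.Ico (0:ℝ) 1 ∧ z = lst m (mu - mu * z)) ∧
    (∀ z ∈ Set.Ico (0:ℝ) 1, z = lst m (mu - mu * z) → z ∈ Set.Ioo (0:ℝ) 1) ∧
    (1 : ℝ) = lst m (mu - mu * 1) := by
  have hm : ∀ᵐ x ∂m, 0 < x := ae_iff.2 (by simp only [not_lt]; exact hPos)
  have hm₀ : ∀ᵐ x ∂m, 0 ≤ x := hm.mono fun x hx => hx.le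
  set φ : ℝ → ℝ := fun z => lst m (mu - mu * z)
  have hmaps : MapsTo (fun z => mu - mu * z) (Iic 1) (Ici 0) := fun z (hz : z ≤ 1) => by
    simp only [mem_Ici]; nlinarith
  have hφ1 : φ 1 = 1 := by simp [φ, lst_zero]
  have hconv : StrictConvexOn ℝ (Iic 1) φ :=
    (strictConvexOn_lst hm).comp_sub_mul (convex_Iic 1) hmu.ne' hmaps
  have hcont : ContinuousOn φ (Iic 1) := (continuousOn_lst hm₀).comp (by fun_prop) hmaps
  have hderiv : HasDerivWithinAt φ (mu * a) (Iio 1) 1 :=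
    ha ▸ hasDerivWithinAt_lst_sub_mul hm₀ hInt hmu
  obtain ⟨w, hφw, hw0, hw1⟩ :=
    ((eventually_lt_of_hasDerivWithinAt_Iio hderiv hφ1 hma).and (Ioo_mem_nhdsLT one_pos)).exists
  obtain ⟨z, hz, hφz⟩ := exists_mem_Icc_isFixedPt (hcont.mono fun y hy => hy.2.trans hw1.le)
    hw0.le (lst_pos hm₀ (by linarith)).le hφw.le
  have hz1 : z < 1 := hz.2.trans_lt hw1
  refine ⟨⟨z, ⟨⟨hz.1, hz1⟩, hφz.symm⟩, fun y ⟨hy, hφy⟩ => ?_⟩,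
    fun y hy hφy => ⟨hφy ▸ lst_pos hm₀ ?_, hy.2⟩, hφ1.symm⟩
  · exact hconv.eq_of_isFixedPt_of_lt hy.2.le hz1.le self_mem_Iic hφy.symm hφz hφ1 hy.2 hz1
  · nlinarith [hy.2]
end

section
/- Let G be the cumulative distribution function of a positive random variable with finite first and second moments a = ∫₀^∞ x dG(x) and b = ∫₀^∞ x² dG(x), with b > a², let μ > 1/a, and let γ be the least positive root of z = Ĝ(μ − μz), where Ĝ(s) = ∫₀^∞ e^{−sx} dG(x). Let ℓ be the least positive root of the equation x = e^{−aμ + aμx} (which lies in (0,1) since aμ > 1). Then ℓ ≤ γ ≤ 1 + (a²/b)(ℓ − 1). -/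
open MeasureTheory Set

/-!
With `s = μ(1 - γ)` the fixed-point equation reads `γ = Ĝ(s) = E e^{-sX}`, and both bounds come
from the strictly convex function `φ z = e^{-aμ + aμz} - z`, whose zeros are `ℓ < 1`: a point
`z < 1` with `φ z ≤ 0` lies right of `ℓ`, one with `φ z ≥ 0` lies left of `ℓ`.
Jensen gives `e^{-sa} ≤ γ`, i.e. `φ γ ≤ 0`. For the upper bound, `t ↦ (1 - e^{-t})/t` is convex;
its tangent at `u = sb/a`, multiplied by `t = sX` and integrated, gives
`1 - γ ≥ (a²/b)(1 - e^{-sb/a})`, which is `φ z ≥ 0` at `z = 1 - (b/a²)(1 - γ)`.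
-/

open Real

section TwoZeros

variable {s : Set ℝ} {f : ℝ → ℝ} {x y z : ℝ}

theorem StrictConvexOn.le_of_map_nonpos (hf : StrictConvexOn ℝ s f) (hy : y ∈ s) (hz : z ∈ s)
    (hxy : x < y) (hzy : z < y) (hfx : f x = 0) (hfy : f y = 0) (hfz : f z ≤ 0) : x ≤ z := by
  by_contra! hzx
  have := hf.lt_on_openSegment hz hy hzy.ne (Ioo_subset_openSegment ⟨hzx, hxy⟩)
  simp [hfx, hfy, hfz] at this

theorem StrictConvexOn.le_of_map_nonneg (hf : StrictConvexOn ℝ s f) (hx : x ∈ s) (hy : y ∈ s)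
    (hzy : z < y) (hfx : f x = 0) (hfy : f y = 0) (hfz : 0 ≤ f z) : z ≤ x := by
  by_contra! hxz
  have := hf.lt_on_openSegment hx hy (hxz.trans hzy).ne (Ioo_subset_openSegment ⟨hxz, hzy⟩)
  simp [hfx, hfy] at this
  linarith

end TwoZeros

theorem strictConvexOn_exp_neg_add_mul_sub {c : ℝ} (hc : c ≠ 0) :
    StrictConvexOn ℝ univ fun z => exp (-c + c * z) - z := by
  refine StrictConvexOn.sub_concaveOn ⟨convex_univ, fun x _ y _ hxy a b ha hb hab => ?_⟩
    (concaveOn_id convex_univ)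
  have := strictConvexOn_exp.2 (mem_univ (-c + c * x)) (mem_univ (-c + c * y))
    (by simpa [hc] using hxy) ha hb hab
  convert this using 2
  simp only [smul_eq_mul]
  linear_combination c * hab

theorem mul_integral_exp_neg_mul (t : ℝ) :
    t * ∫ v in (0 : ℝ)..1, exp (-(t * v)) = 1 - exp (-t) := by
  rw [← intervalIntegral.integral_const_mul,
    intervalIntegral.integral_eq_sub_of_hasDerivAt (f := fun v => -exp (-(t * v)))
      (fun v _ => ?_) ((by fun_prop : Continuous fun v => t * exp (-(t * v))).intervalIntegrable 0 1)]
  · simp only [mul_one, mul_zero, neg_zero, exp_zero]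
    ring
  · have hlin : HasDerivAt (fun v => -(t * v)) (-t) v := by
      simpa using ((hasDerivAt_id v).const_mul t).fun_neg
    exact hlin.exp.neg.congr_deriv (by ring)

theorem integral_exp_neg_mul {u : ℝ} (hu : u ≠ 0) :
    ∫ v in (0 : ℝ)..1, exp (-(u * v)) = (1 - exp (-u)) / u := by
  rw [← mul_integral_exp_neg_mul, mul_div_cancel_left₀ _ hu]

/-- `t ↦ ∫₀¹ e^{-tv} dv = (1 - e^{-t}) / t` is convex; this is its tangent line at `u`,
multiplied by `t`. -/
theorem one_sub_exp_neg_ge_tangent {t : ℝ} (ht : 0 ≤ t) (u : ℝ) :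
    t * (∫ v in (0 : ℝ)..1, exp (-(u * v))) -
        t * (t - u) * ∫ v in (0 : ℝ)..1, v * exp (-(u * v)) ≤ 1 - exp (-t) := by
  rw [← mul_integral_exp_neg_mul, ← intervalIntegral.integral_const_mul,
    ← intervalIntegral.integral_const_mul,
    ← intervalIntegral.integral_sub (Continuous.intervalIntegrable (by fun_prop) _ _)
      (Continuous.intervalIntegrable (by fun_prop) _ _),
    ← intervalIntegral.integral_const_mul]
  refine intervalIntegral.integral_mono_on zero_le_one
    (Continuous.intervalIntegrable (by fun_prop) _ _)
    (Continuous.intervalIntegrable (by fun_prop) _ _) fun v _ => ?_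
  calc t * exp (-(u * v)) - t * (t - u) * (v * exp (-(u * v)))
      = t * exp (-(u * v)) * (-((t - u) * v) + 1) := by ring
    _ ≤ t * exp (-(u * v)) * exp (-((t - u) * v)) := by gcongr; exact add_one_le_exp _
    _ = t * exp (-(t * v)) := by rw [mul_assoc, ← exp_add]; ring_nf

section Moments

variable {m : Measure ℝ} [IsProbabilityMeasure m]

theorem integrable_exp_neg_mul_of_nonneg (hX : ∀ᵐ x ∂m, 0 ≤ x) {s : ℝ} (hs : 0 ≤ s) :
    Integrable (fun x => exp (-s * x)) m := by
  refine (integrable_const (1 : ℝ)).mono' (by fun_prop) ?_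
  filter_upwards [hX] with x hx
  rw [norm_of_nonneg (exp_pos _).le, exp_le_one_iff]
  nlinarith

theorem exp_neg_mul_le_lst (hX : ∀ᵐ x ∂m, 0 ≤ x) (hInt1 : Integrable (fun x : ℝ => x) m)
    {s : ℝ} (hs : 0 ≤ s) : exp (-s * ∫ x, x ∂m) ≤ lst m s := by
  have := convexOn_exp.map_integral_le continuous_exp.continuousOn isClosed_univ
    (by simp) (hInt1.const_mul (-s)) (integrable_exp_neg_mul_of_nonneg hX hs)
  rwa [integral_const_mul] at this

theorem mul_one_sub_exp_le_one_sub_lst (hX : ∀ᵐ x ∂m, 0 ≤ x) {a b : ℝ}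
    (hInt1 : Integrable (fun x : ℝ => x) m) (ha : ∫ x, x ∂m = a) (ha0 : 0 < a)
    (hInt2 : Integrable (fun x : ℝ => x ^ 2) m) (hb : ∫ x, x ^ 2 ∂m = b) (hb0 : 0 < b)
    {s : ℝ} (hs : 0 < s) : a ^ 2 / b * (1 - exp (-(s * (b / a)))) ≤ 1 - lst m s := by
  -- the tangent point `u = s b / a` makes `s x (s x - u)` have mean zero
  set u := s * (b / a) with hu
  set I := ∫ v in (0 : ℝ)..1, exp (-(u * v))
  set J := ∫ v in (0 : ℝ)..1, v * exp (-(u * v))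
  have hI : I = (1 - exp (-u)) / u := integral_exp_neg_mul (by positivity)
  have hint : Integrable (fun x => (s * I + s * u * J) * x - s ^ 2 * J * x ^ 2) m :=
    (hInt1.const_mul _).sub (hInt2.const_mul _)
  have hpoint : ∀ᵐ x ∂m, (s * I + s * u * J) * x - s ^ 2 * J * x ^ 2 ≤ 1 - exp (-s * x) := by
    filter_upwards [hX] with x hx
    have := one_sub_exp_neg_ge_tangent (mul_nonneg hs.le hx) u
    rw [neg_mul]
    linarith
  have hlhs : ∫ x, ((s * I + s * u * J) * x - s ^ 2 * J * x ^ 2) ∂m =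
      a ^ 2 / b * (1 - exp (-u)) := by
    rw [integral_sub (hInt1.const_mul _) (hInt2.const_mul _), integral_const_mul,
      integral_const_mul, ha, hb, hI, hu]
    field_simp
    ring
  have hrhs : ∫ x, (1 - exp (-s * x)) ∂m = 1 - lst m s := by
    rw [integral_sub (integrable_const 1) (integrable_exp_neg_mul_of_nonneg hX hs.le)]
    simp [lst]
  rw [← hlhs, ← hrhs]
  exact integral_mono_ae hint ((integrable_const 1).sub (integrable_exp_neg_mul_of_nonneg hX hs.le))
    hpoint

end Moments

/-- Rolski's bounds: if `G` is the CDF of a positive random variable with first two moments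
`a` and `b`, `b > a²`, `μ > 1/a`, `γ` is the least positive root of `z = Ĝ(μ - μz)` and `ℓ`
is the least positive root of `x = e^{-aμ + aμx}`, then `ℓ ≤ γ ≤ 1 + (a²/b)(ℓ - 1)`. -/
theorem rolski_bounds
    (m : Measure ℝ) [IsProbabilityMeasure m] (hPos : m (Set.Iic 0) = 0)
    (a b : ℝ) (ha0 : 0 < a)
    (hInt1 : Integrable (fun x : ℝ => x) m) (ha : ∫ x, x ∂m = a)
    (hInt2 : Integrable (fun x : ℝ => x ^ 2) m) (hb : ∫ x, x ^ 2 ∂m = b)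
    (hba : a ^ 2 < b)
    (mu : ℝ) (hmu : 1 / a < mu)
    (γ : ℝ)
    (hγ : γ ∈ Set.Ioo (0:ℝ) 1 ∧ γ = lst m (mu - mu * γ) ∧
      ∀ z ∈ Set.Ioo (0:ℝ) 1, z = lst m (mu - mu * z) → γ ≤ z)
    (ℓ : ℝ)
    (hℓ : ℓ ∈ Set.Ioo (0:ℝ) 1 ∧ ℓ = Real.exp (-(a * mu) + a * mu * ℓ) ∧
      ∀ z ∈ Set.Ioo (0:ℝ) 1, z = Real.exp (-(a * mu) + a * mu * z) → ℓ ≤ z) :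
    ℓ ≤ γ ∧ γ ≤ 1 + a ^ 2 / b * (ℓ - 1) := by
  obtain ⟨⟨-, hγ1⟩, hγeq, -⟩ := hγ
  obtain ⟨⟨-, hℓ1⟩, hℓeq, -⟩ := hℓ
  have hmu0 : 0 < mu := (one_div_pos.2 ha0).trans hmu
  have hb0 : 0 < b := (by positivity : (0 : ℝ) < a ^ 2).trans hba
  have hs : 0 < mu - mu * γ := by nlinarith
  have hX : ∀ᵐ x ∂m, 0 ≤ x := measure_mono_null (fun x (hx : ¬0 ≤ x) => (not_le.1 hx).le) hPos
  have hφ := strictConvexOn_exp_neg_add_mul_sub (mul_pos ha0 hmu0).ne'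
  have hφℓ : rexp (-(a * mu) + a * mu * ℓ) - ℓ = 0 := by rw [← hℓeq, sub_self]
  have hφ1 : rexp (-(a * mu) + a * mu * 1) - 1 = 0 := by simp
  constructor
  · have hJensen := exp_neg_mul_le_lst hX hInt1 hs.le
    rw [ha, ← hγeq] at hJensen
    refine hφ.le_of_map_nonpos (mem_univ 1) (mem_univ γ) hℓ1 hγ1 hφℓ hφ1 ?_
    rw [show -(a * mu) + a * mu * γ = -(mu - mu * γ) * a by ring]
    linarith
  · have hupper := mul_one_sub_exp_le_one_sub_lst hX hInt1 ha ha0 hInt2 hb hb0 hs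
    rw [← hγeq] at hupper
    have hr : 0 < a ^ 2 / b := by positivity
    have hzℓ := hφ.le_of_map_nonneg (mem_univ ℓ) (mem_univ 1) (z := 1 - (1 - γ) / (a ^ 2 / b))
      (sub_lt_self 1 (div_pos (by linarith) hr)) hφℓ hφ1 ?_
    · rw [sub_le_comm, le_div_iff₀' hr] at hzℓ
      linarith
    rw [show -(a * mu) + a * mu * (1 - (1 - γ) / (a ^ 2 / b)) = -((mu - mu * γ) * (b / a)) by
      field_simp; ring]
    linarith [(le_div_iff₀' hr).2 hupper]
end
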